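/- arXiv:2203.12491 — 2 statements merged into one kernel-verified Lean document; each statement's English description precedes it below -/
import Mathlib

section
/- Let X ∈ ℝ^{n₁×n₂×n₃}, and suppose for each mode i there exist an orthogonal projection Πᵢ and a bound εᵢ ≥ 0 with ‖(I - Πᵢ) X_{(i)}‖_F ≤ εᵢ, where X_{(i)} is the mode-i unfolding. Then ‖X - X ×₁ Π₁ ×₂ Π₂ ×₃ Π₃‖_F² ≤ ε₁² + ε₂² + ε₃². -/
open Matrix

/-- Frobenius norm of a real matrix. -/
noncomputable def frobNorm {α β : Type*} [Fintype α] [Fintype β]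
    (A : Matrix α β ℝ) : ℝ := Real.sqrt (∑ i, ∑ j, (A i j) ^ 2)

/-- Squared Frobenius norm of a real matrix. -/
noncomputable def frobSq {α β : Type*} [Fintype α] [Fintype β]
    (A : Matrix α β ℝ) : ℝ := ∑ i, ∑ j, (A i j) ^ 2

/-- Spectral norm (largest singular value) of a real matrix: the operator norm
of the induced linear map between Euclidean spaces. -/
noncomputable def specNorm {α β : Type*} [Fintype α] [Fintype β] [DecidableEq α] [DecidableEq β]
    (A : Matrix α β ℝ) : ℝ :=
  ‖LinearMap.toContinuousLinearMap (Matrix.toEuclideanLin A)‖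

/-- Moore–Penrose pseudoinverse of a full-column-rank matrix: `C⁺ = (CᵀC)⁻¹Cᵀ`. -/
noncomputable def pinv {m k : ℕ} (C : Matrix (Fin m) (Fin k) ℝ) : Matrix (Fin k) (Fin m) ℝ :=
  (Cᵀ * C)⁻¹ * Cᵀ

/-- Mode-1 product of an order-3 tensor with a matrix. -/
def mode1 {n₁ n₂ n₃ m : ℕ} (U : Matrix (Fin m) (Fin n₁) ℝ)
    (X : Fin n₁ × Fin n₂ × Fin n₃ → ℝ) : Fin m × Fin n₂ × Fin n₃ → ℝ :=
  fun p => ∑ j, U p.1 j * X (j, p.2.1, p.2.2)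

/-- Mode-2 product of an order-3 tensor with a matrix. -/
def mode2 {n₁ n₂ n₃ m : ℕ} (V : Matrix (Fin m) (Fin n₂) ℝ)
    (X : Fin n₁ × Fin n₂ × Fin n₃ → ℝ) : Fin n₁ × Fin m × Fin n₃ → ℝ :=
  fun p => ∑ k, V p.2.1 k * X (p.1, k, p.2.2)

/-- Mode-3 product of an order-3 tensor with a matrix. -/
def mode3 {n₁ n₂ n₃ m : ℕ} (W : Matrix (Fin m) (Fin n₃) ℝ)
    (X : Fin n₁ × Fin n₂ × Fin n₃ → ℝ) : Fin n₁ × Fin n₂ × Fin m → ℝ :=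
  fun p => ∑ l, W p.2.2 l * X (p.1, p.2.1, l)

/-- Mode-1 unfolding of an order-3 tensor. -/
def unfold1 {n₁ n₂ n₃ : ℕ} (X : Fin n₁ × Fin n₂ × Fin n₃ → ℝ) :
    Matrix (Fin n₁) (Fin n₂ × Fin n₃) ℝ := Matrix.of fun j p => X (j, p.1, p.2)

/-- Mode-2 unfolding of an order-3 tensor. -/
def unfold2 {n₁ n₂ n₃ : ℕ} (X : Fin n₁ × Fin n₂ × Fin n₃ → ℝ) :
    Matrix (Fin n₂) (Fin n₁ × Fin n₃) ℝ := Matrix.of fun k p => X (p.1, k, p.2)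

/-- Mode-3 unfolding of an order-3 tensor. -/
def unfold3 {n₁ n₂ n₃ : ℕ} (X : Fin n₁ × Fin n₂ × Fin n₃ → ℝ) :
    Matrix (Fin n₃) (Fin n₁ × Fin n₂) ℝ := Matrix.of fun l p => X (p.1, p.2, l)

/-- Frobenius norm of an order-3 tensor. -/
noncomputable def tnorm {n₁ n₂ n₃ : ℕ} (X : Fin n₁ × Fin n₂ × Fin n₃ → ℝ) : ℝ :=
  Real.sqrt (∑ p, (X p) ^ 2)

/-- Squared Frobenius norm of an order-3 tensor. -/
noncomputable def tSq {n₁ n₂ n₃ : ℕ} (X : Fin n₁ × Fin n₂ × Fin n₃ → ℝ) : ℝ :=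
  ∑ p, (X p) ^ 2

/-
Flatten tensors to vectors of `EuclideanSpace ℝ (Fin n₁ × Fin n₂ × Fin n₃)`. There the mode-2
and mode-3 products with `Π₂`, `Π₃` are the Kronecker products `1 ⊗ Π₂ ⊗ 1` and `1 ⊗ 1 ⊗ Π₃`,
i.e. two commuting orthogonal projections `p`, `q`. With `x = X` and `y = X ×₁ Π₁`,
`x - q p y = (x - q x) + q (x - p x) + q p (x - y)` is an orthogonal sum (note
`q (x - p x) = q x - p (q x)`), and since projections are contractions the three squared norms
are at most `‖x - q x‖²`, `‖x - p x‖²`, `‖x - y‖²`, the squared Frobenius norms of the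
`(I - Πᵢ) X_{(i)}`.
-/

open scoped InnerProductSpace Kronecker

section StarProjection

variable {𝕜 E : Type*} [RCLike 𝕜] [NormedAddCommGroup E] [InnerProductSpace 𝕜 E]

theorem norm_add_add_sq_of_inner_eq_zero {u v w : E} (huv : ⟪u, v + w⟫_𝕜 = 0)
    (hvw : ⟪v, w⟫_𝕜 = 0) : ‖u + v + w‖ ^ 2 = ‖u‖ ^ 2 + ‖v‖ ^ 2 + ‖w‖ ^ 2 := by
  rw [add_assoc, sq, norm_add_sq_eq_norm_sq_add_norm_sq_of_inner_eq_zero _ _ huv,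
    norm_add_sq_eq_norm_sq_add_norm_sq_of_inner_eq_zero _ _ hvw]
  ring

variable [CompleteSpace E] {p q : E →L[𝕜] E}

theorem IsStarProjection.inner_sub_apply_apply_eq_zero (hp : IsStarProjection p) (x y : E) :
    ⟪x - p x, p y⟫_𝕜 = 0 := by
  rw [← ContinuousLinearMap.adjoint_inner_left, hp.isSelfAdjoint.adjoint_eq, map_sub,
    ← mul_apply_eq_comp, hp.isIdempotentElem.eq, sub_self, inner_zero_left]

theorem IsStarProjection.norm_apply_le (hp : IsStarProjection p) (x : E) : ‖p x‖ ≤ ‖x‖ := by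
  simpa using p.le_of_opNorm_le (hp.norm_le p) x

theorem IsStarProjection.norm_sub_apply_apply_sq_le (hp : IsStarProjection p)
    (hq : IsStarProjection q) (hpq : Commute p q) (x y : E) :
    ‖x - q (p y)‖ ^ 2 ≤ ‖x - y‖ ^ 2 + ‖x - p x‖ ^ 2 + ‖x - q x‖ ^ 2 := by
  have hqp : ∀ z, q (p z) = p (q z) := fun z => congr($hpq.eq.symm z)
  have hsplit : x - q (p y) = (x - q x) + (q x - p (q x)) + p (q (x - y)) := by
    rw [← hqp, ← hqp, map_sub, map_sub]; abel
  have horth : ‖x - q (p y)‖ ^ 2 =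
      ‖x - q x‖ ^ 2 + ‖q x - p (q x)‖ ^ 2 + ‖p (q (x - y))‖ ^ 2 := by
    rw [hsplit]
    refine norm_add_add_sq_of_inner_eq_zero (𝕜 := 𝕜) ?_ (hp.inner_sub_apply_apply_eq_zero _ _)
    rw [← hqp, ← hqp, ← map_sub, ← map_add]
    exact hq.inner_sub_apply_apply_eq_zero _ _
  have h₁ : ‖q x - p (q x)‖ ≤ ‖x - p x‖ := by
    rw [← hqp, ← map_sub]; exact hq.norm_apply_le _
  have h₂ : ‖p (q (x - y))‖ ≤ ‖x - y‖ := (hp.norm_apply_le _).trans (hq.norm_apply_le _)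
  rw [horth]
  linarith [pow_le_pow_left₀ (norm_nonneg _) h₁ 2, pow_le_pow_left₀ (norm_nonneg _) h₂ 2]

end StarProjection

theorem Matrix.isStarProjection_of_transpose_eq {n R : Type*} [Fintype n] [CommSemiring R]
    [StarRing R] [TrivialStar R] {P : Matrix n n R} (hidem : P * P = P) (hsym : Pᵀ = P) :
    IsStarProjection P :=
  ⟨hidem, by rw [IsSelfAdjoint, star_eq_conjTranspose, conjTranspose_eq_transpose_of_trivial, hsym]⟩

theorem IsStarProjection.kronecker {m n R : Type*} [Fintype m] [Fintype n] [CommSemiring R]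
    [StarRing R] {P : Matrix m m R} {Q : Matrix n n R} (hP : IsStarProjection P)
    (hQ : IsStarProjection Q) : IsStarProjection (P ⊗ₖ Q) :=
  ⟨by rw [IsIdempotentElem, ← mul_kronecker_mul, hP.isIdempotentElem.eq, hQ.isIdempotentElem.eq],
   by rw [IsSelfAdjoint, star_eq_conjTranspose, conjTranspose_kronecker, ← star_eq_conjTranspose,
     ← star_eq_conjTranspose, hP.isSelfAdjoint.star_eq, hQ.isSelfAdjoint.star_eq]⟩

section Tensor

variable {n₁ n₂ n₃ : ℕ}

theorem mode2_eq_kronecker_mulVec {m : ℕ} (V : Matrix (Fin m) (Fin n₂) ℝ)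
    (X : Fin n₁ × Fin n₂ × Fin n₃ → ℝ) :
    mode2 V X = (1 ⊗ₖ (V ⊗ₖ 1)) *ᵥ X := by
  funext ⟨i, j, k⟩
  simp [mode2, mulVec, dotProduct, Fintype.sum_prod_type, one_apply]

theorem mode3_eq_kronecker_mulVec {m : ℕ} (W : Matrix (Fin m) (Fin n₃) ℝ)
    (X : Fin n₁ × Fin n₂ × Fin n₃ → ℝ) :
    mode3 W X = (1 ⊗ₖ (1 ⊗ₖ W)) *ᵥ X := by
  funext ⟨i, j, k⟩
  simp [mode3, mulVec, dotProduct, Fintype.sum_prod_type, one_apply]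

theorem mode1_one_sub (P : Matrix (Fin n₁) (Fin n₁) ℝ) (X : Fin n₁ × Fin n₂ × Fin n₃ → ℝ) :
    mode1 (1 - P) X = X - mode1 P X := by
  funext p
  simp [mode1, sub_mul, Finset.sum_sub_distrib, one_apply]

theorem mode2_one_sub (P : Matrix (Fin n₂) (Fin n₂) ℝ) (X : Fin n₁ × Fin n₂ × Fin n₃ → ℝ) :
    mode2 (1 - P) X = X - mode2 P X := by
  funext p
  simp [mode2, sub_mul, Finset.sum_sub_distrib, one_apply]

theorem mode3_one_sub (P : Matrix (Fin n₃) (Fin n₃) ℝ) (X : Fin n₁ × Fin n₂ × Fin n₃ → ℝ) :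
    mode3 (1 - P) X = X - mode3 P X := by
  funext p
  simp [mode3, sub_mul, Finset.sum_sub_distrib, one_apply]

theorem frobNorm_mul_unfold1 {m : ℕ} (U : Matrix (Fin m) (Fin n₁) ℝ)
    (X : Fin n₁ × Fin n₂ × Fin n₃ → ℝ) :
    frobNorm (U * unfold1 X) = tnorm (mode1 U X) := by
  simp only [frobNorm, tnorm, Fintype.sum_prod_type, mode1, unfold1, mul_apply, of_apply]

theorem frobNorm_mul_unfold2 {m : ℕ} (V : Matrix (Fin m) (Fin n₂) ℝ)
    (X : Fin n₁ × Fin n₂ × Fin n₃ → ℝ) :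
    frobNorm (V * unfold2 X) = tnorm (mode2 V X) := by
  simp only [frobNorm, tnorm, Fintype.sum_prod_type, mode2, unfold2, mul_apply, of_apply]
  rw [Finset.sum_comm]

theorem frobNorm_mul_unfold3 {m : ℕ} (W : Matrix (Fin m) (Fin n₃) ℝ)
    (X : Fin n₁ × Fin n₂ × Fin n₃ → ℝ) :
    frobNorm (W * unfold3 X) = tnorm (mode3 W X) := by
  simp only [frobNorm, tnorm, Fintype.sum_prod_type, mode3, unfold3, mul_apply, of_apply]
  rw [Finset.sum_comm]
  exact congrArg _ (Finset.sum_congr rfl fun _ _ => Finset.sum_comm)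

theorem tnorm_eq_norm_toLp (X : Fin n₁ × Fin n₂ × Fin n₃ → ℝ) :
    tnorm X = ‖WithLp.toLp 2 X‖ := by
  simp [tnorm, EuclideanSpace.norm_eq]

theorem tSq_eq_tnorm_sq (X : Fin n₁ × Fin n₂ × Fin n₃ → ℝ) : tSq X = tnorm X ^ 2 :=
  (Real.sq_sqrt (Finset.sum_nonneg fun _ _ => sq_nonneg _)).symm

end Tensor

theorem stmt11_general {n₁ n₂ n₃ : ℕ} (X : Fin n₁ × Fin n₂ × Fin n₃ → ℝ)
    (Pi1 : Matrix (Fin n₁) (Fin n₁) ℝ) (Pi2 : Matrix (Fin n₂) (Fin n₂) ℝ)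
    (Pi3 : Matrix (Fin n₃) (Fin n₃) ℝ)
    (h2idem : Pi2 * Pi2 = Pi2) (h2sym : Pi2ᵀ = Pi2)
    (h3idem : Pi3 * Pi3 = Pi3) (h3sym : Pi3ᵀ = Pi3)
    (ε₁ ε₂ ε₃ : ℝ)
    (hb₁ : frobNorm ((1 - Pi1) * unfold1 X) ≤ ε₁)
    (hb₂ : frobNorm ((1 - Pi2) * unfold2 X) ≤ ε₂)
    (hb₃ : frobNorm ((1 - Pi3) * unfold3 X) ≤ ε₃) :
    tSq (X - mode3 Pi3 (mode2 Pi2 (mode1 Pi1 X))) ≤ ε₁ ^ 2 + ε₂ ^ 2 + ε₃ ^ 2 := by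
  set B : Matrix (Fin n₁ × Fin n₂ × Fin n₃) (Fin n₁ × Fin n₂ × Fin n₃) ℝ := 1 ⊗ₖ (Pi2 ⊗ₖ 1)
  set C : Matrix (Fin n₁ × Fin n₂ × Fin n₃) (Fin n₁ × Fin n₂ × Fin n₃) ℝ := 1 ⊗ₖ (1 ⊗ₖ Pi3)
  have hB : IsStarProjection B := (IsStarProjection.one _).kronecker
    ((isStarProjection_of_transpose_eq h2idem h2sym).kronecker (IsStarProjection.one _))
  have hC : IsStarProjection C := (IsStarProjection.one _).kronecker
    ((IsStarProjection.one _).kronecker (isStarProjection_of_transpose_eq h3idem h3sym))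
  have hBC : Commute B C := by
    simp only [B, C, Commute, SemiconjBy, ← mul_kronecker_mul, mul_one, one_mul]
  have key := (hB.map (toEuclideanCLM (𝕜 := ℝ))).norm_sub_apply_apply_sq_le
    (hC.map (toEuclideanCLM (𝕜 := ℝ))) (hBC.map _) (WithLp.toLp 2 X) (WithLp.toLp 2 (mode1 Pi1 X))
  simp only [toEuclideanCLM_toLp, ← WithLp.toLp_sub, B, C, ← mode2_eq_kronecker_mulVec,
    ← mode3_eq_kronecker_mulVec, ← tnorm_eq_norm_toLp, ← mode1_one_sub,
    ← mode2_one_sub, ← mode3_one_sub, ← frobNorm_mul_unfold1, ← frobNorm_mul_unfold2,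
    ← frobNorm_mul_unfold3] at key
  rw [tSq_eq_tnorm_sq]
  refine key.trans ?_
  gcongr <;> exact Real.sqrt_nonneg _

theorem stmt11 {n₁ n₂ n₃ : ℕ} (X : Fin n₁ × Fin n₂ × Fin n₃ → ℝ)
    (Pi1 : Matrix (Fin n₁) (Fin n₁) ℝ) (Pi2 : Matrix (Fin n₂) (Fin n₂) ℝ)
    (Pi3 : Matrix (Fin n₃) (Fin n₃) ℝ)
    (h1idem : Pi1 * Pi1 = Pi1) (h1sym : Pi1ᵀ = Pi1)
    (h2idem : Pi2 * Pi2 = Pi2) (h2sym : Pi2ᵀ = Pi2)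
    (h3idem : Pi3 * Pi3 = Pi3) (h3sym : Pi3ᵀ = Pi3)
    (ε₁ ε₂ ε₃ : ℝ) (hε₁ : 0 ≤ ε₁) (hε₂ : 0 ≤ ε₂) (hε₃ : 0 ≤ ε₃)
    (hb₁ : frobNorm ((1 - Pi1) * unfold1 X) ≤ ε₁)
    (hb₂ : frobNorm ((1 - Pi2) * unfold2 X) ≤ ε₂)
    (hb₃ : frobNorm ((1 - Pi3) * unfold3 X) ≤ ε₃) :
    tSq (X - mode3 Pi3 (mode2 Pi2 (mode1 Pi1 X))) ≤ ε₁ ^ 2 + ε₂ ^ 2 + ε₃ ^ 2 :=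
  stmt11_general X Pi1 Pi2 Pi3 h2idem h2sym h3idem h3sym ε₁ ε₂ ε₃ hb₁ hb₂ hb₃
end

section
/- Deterministic core of the hybrid error bound (d = 3, t = 1): let A ∈ ℝ^{n₁×n₂×n₃} with unfoldings A_{(i)}. Suppose C ∈ ℝ^{n₁×r₁} has full column rank and A_{(1)} = C B + E; suppose for j = 2,3, U_j ∈ ℝ^{n_j×r_j} has orthonormal columns and A_{(j)} = U_j Σ_j V_jᵀ + H_j with V_jᵀV_j = I. Define the core tensor G = A ×₁ C⁺ ×₂ U₂ᵀ ×₃ U₃ᵀ and the approximation Â = G ×₁ C ×₂ U₂ ×₃ U₃. Then ‖A - Â‖_F² ≤ ‖E‖_F² + ‖H₂‖_F² + ‖H₃‖_F². -/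
/-!
With `P₁ = C C⁺` and `Pⱼ = Uⱼ Uⱼᵀ = Uⱼ Uⱼ⁺`, all three are orthogonal projections and
`Â = A ×₁ P₁ ×₂ P₂ ×₃ P₃`. For an orthogonal projection `P` acting on mode `i`, the residual
`X - Y ×ᵢ P` splits orthogonally as `X ×ᵢ (1 - P) + (X - Y) ×ᵢ P`, so
`‖X - Y ×ᵢ P‖² ≤ ‖(1 - P) X_{(i)}‖² + ‖X - Y‖²`. Peeling off modes 3, 2, 1 in turn bounds
`‖A - Â‖²` by `∑ᵢ ‖(1 - Pᵢ) A_{(i)}‖²`. Finally `Pᵢ` fixes the range of `C` resp. `Uⱼ`, so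
`(1 - P₁) A_{(1)} = (1 - P₁) E` and `(1 - Pⱼ) A_{(j)} = (1 - Pⱼ) Hⱼ`, and `1 - Pᵢ` does not
increase the Frobenius norm.
-/

open Matrix

section Frobenius

variable {α β γ : Type*} [Fintype α] [Fintype β]

lemma frobSq_eq_trace (M : Matrix α β ℝ) : frobSq M = (Mᵀ * M).trace := by
  simp only [frobSq, trace, diag, mul_apply, transpose_apply, sq]
  exact Finset.sum_comm

lemma frobSq_nonneg (M : Matrix α β ℝ) : 0 ≤ frobSq M := by
  unfold frobSq; positivity

lemma frobSq_add_of_transpose_mul_eq_zero {M N : Matrix α β ℝ} (h : Mᵀ * N = 0) :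
    frobSq (M + N) = frobSq M + frobSq N := by
  have h' : Nᵀ * M = 0 := by
    rw [← transpose_transpose (Nᵀ * M), transpose_mul, transpose_transpose, h, transpose_zero]
  simp only [frobSq_eq_trace, transpose_add, Matrix.add_mul, Matrix.mul_add, h, h', trace_add,
    trace_zero]
  ring

lemma transpose_eq_of_isStarProjection {P : Matrix α α ℝ} (hP : IsStarProjection P) :
    Pᵀ = P := by
  simpa [star_eq_conjTranspose, conjTranspose_eq_transpose_of_trivial] using
    hP.isSelfAdjoint.star_eq

variable [DecidableEq α] {P : Matrix α α ℝ}

lemma frobSq_one_sub_mul_add_mul (hP : IsStarProjection P) (M N : Matrix α β ℝ) :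
    frobSq ((1 - P) * M + P * N) = frobSq ((1 - P) * M) + frobSq (P * N) := by
  refine frobSq_add_of_transpose_mul_eq_zero ?_
  rw [transpose_mul, transpose_eq_of_isStarProjection hP.one_sub, Matrix.mul_assoc,
    ← Matrix.mul_assoc (1 - P), hP.one_sub_mul_self, Matrix.zero_mul, Matrix.mul_zero]

lemma frobSq_mul_le (hP : IsStarProjection P) (M : Matrix α β ℝ) :
    frobSq (P * M) ≤ frobSq M := by
  have h := frobSq_one_sub_mul_add_mul hP M M
  rw [← Matrix.add_mul, sub_add_cancel, Matrix.one_mul] at h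
  linarith [frobSq_nonneg ((1 - P) * M)]

lemma frobSq_sub_mul_le (hP : IsStarProjection P) (M N : Matrix α β ℝ) :
    frobSq (M - P * N) ≤ frobSq ((1 - P) * M) + frobSq (M - N) := by
  have hsplit : M - P * N = (1 - P) * M + P * (M - N) := by
    rw [Matrix.sub_mul, Matrix.one_mul, Matrix.mul_sub]; abel
  rw [hsplit, frobSq_one_sub_mul_add_mul hP]
  gcongr
  exact frobSq_mul_le hP _

lemma frobSq_one_sub_mul_le [Fintype γ] {C : Matrix α γ ℝ} {B : Matrix γ β ℝ} {M E : Matrix α β ℝ}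
    (hP : IsStarProjection P) (hPC : P * C = C) (hM : M = C * B + E) :
    frobSq ((1 - P) * M) ≤ frobSq E := by
  have hkill : (1 - P) * (C * B) = 0 := by
    rw [← Matrix.mul_assoc, Matrix.sub_mul, Matrix.one_mul, hPC, sub_self, Matrix.zero_mul]
  rw [hM, Matrix.mul_add, hkill, zero_add]
  exact frobSq_mul_le hP.one_sub E

end Frobenius

section Pinv

variable {m k : ℕ}

lemma isUnit_of_rank_eq_card {n K : Type*} [Fintype n] [DecidableEq n] [Field K]
    (M : Matrix n n K) (h : M.rank = Fintype.card n) : IsUnit M := by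
  rw [← mulVec_surjective_iff_isUnit, ← Matrix.coe_mulVecLin, ← LinearMap.range_eq_top]
  apply Submodule.eq_top_of_finrank_eq
  rw [Module.finrank_fintype_fun_eq_card, ← h]
  rfl

lemma pinv_mul_self_of_rank_eq {C : Matrix (Fin m) (Fin k) ℝ} (h : C.rank = k) :
    pinv C * C = 1 := by
  have hunit : IsUnit (Cᵀ * C) :=
    isUnit_of_rank_eq_card _ (by rw [rank_transpose_mul_self, h, Fintype.card_fin])
  rw [pinv, Matrix.mul_assoc, nonsing_inv_mul _ ((isUnit_iff_isUnit_det _).mp hunit)]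

lemma pinv_eq_transpose {U : Matrix (Fin m) (Fin k) ℝ} (h : Uᵀ * U = 1) : pinv U = Uᵀ := by
  rw [pinv, h, inv_one, Matrix.one_mul]

lemma pinv_mul_self_of_transpose_mul_self {U : Matrix (Fin m) (Fin k) ℝ} (h : Uᵀ * U = 1) :
    pinv U * U = 1 := by
  rw [pinv_eq_transpose h, h]

lemma isStarProjection_mul_pinv {C : Matrix (Fin m) (Fin k) ℝ} (h : pinv C * C = 1) :
    IsStarProjection (C * pinv C) := by
  refine ⟨?_, ?_⟩
  · rw [IsIdempotentElem, Matrix.mul_assoc, ← Matrix.mul_assoc (pinv C), h, Matrix.one_mul]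
  · rw [IsSelfAdjoint, star_eq_conjTranspose, conjTranspose_eq_transpose_of_trivial, pinv,
      transpose_mul, transpose_mul, transpose_nonsing_inv, transpose_mul, transpose_transpose,
      Matrix.mul_assoc]

lemma frobSq_one_sub_mul_pinv_mul_le {β : Type*} [Fintype β] {C : Matrix (Fin m) (Fin k) ℝ}
    {B : Matrix (Fin k) β ℝ} {M E : Matrix (Fin m) β ℝ} (h : pinv C * C = 1)
    (hM : M = C * B + E) : frobSq ((1 - C * pinv C) * M) ≤ frobSq E :=
  frobSq_one_sub_mul_le (isStarProjection_mul_pinv h) (by rw [Matrix.mul_assoc, h, Matrix.mul_one])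
    hM

end Pinv

section Tensor

variable {n₁ n₂ n₃ m m' : ℕ}

lemma unfold1_injective : Function.Injective (unfold1 (n₁ := n₁) (n₂ := n₂) (n₃ := n₃)) :=
  fun _ _ h => funext fun ⟨i, j, l⟩ => congrFun (congrFun h i) (j, l)

lemma unfold2_injective : Function.Injective (unfold2 (n₁ := n₁) (n₂ := n₂) (n₃ := n₃)) :=
  fun _ _ h => funext fun ⟨i, j, l⟩ => congrFun (congrFun h j) (i, l)

lemma unfold3_injective : Function.Injective (unfold3 (n₁ := n₁) (n₂ := n₂) (n₃ := n₃)) :=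
  fun _ _ h => funext fun ⟨i, j, l⟩ => congrFun (congrFun h l) (i, j)

lemma unfold1_sub (X Y : Fin n₁ × Fin n₂ × Fin n₃ → ℝ) :
    unfold1 (X - Y) = unfold1 X - unfold1 Y := rfl

lemma unfold2_sub (X Y : Fin n₁ × Fin n₂ × Fin n₃ → ℝ) :
    unfold2 (X - Y) = unfold2 X - unfold2 Y := rfl

lemma unfold3_sub (X Y : Fin n₁ × Fin n₂ × Fin n₃ → ℝ) :
    unfold3 (X - Y) = unfold3 X - unfold3 Y := rfl

lemma unfold1_mode1 (M : Matrix (Fin m) (Fin n₁) ℝ) (X : Fin n₁ × Fin n₂ × Fin n₃ → ℝ) :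
    unfold1 (mode1 M X) = M * unfold1 X := by
  ext; simp [unfold1, mode1, mul_apply]

lemma unfold2_mode2 (M : Matrix (Fin m) (Fin n₂) ℝ) (X : Fin n₁ × Fin n₂ × Fin n₃ → ℝ) :
    unfold2 (mode2 M X) = M * unfold2 X := by
  ext; simp [unfold2, mode2, mul_apply]

lemma unfold3_mode3 (M : Matrix (Fin m) (Fin n₃) ℝ) (X : Fin n₁ × Fin n₂ × Fin n₃ → ℝ) :
    unfold3 (mode3 M X) = M * unfold3 X := by
  ext; simp [unfold3, mode3, mul_apply]

lemma tSq_eq_frobSq_unfold1 (X : Fin n₁ × Fin n₂ × Fin n₃ → ℝ) :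
    tSq X = frobSq (unfold1 X) := by
  simp [tSq, frobSq, unfold1, Fintype.sum_prod_type]

lemma tSq_eq_frobSq_unfold2 (X : Fin n₁ × Fin n₂ × Fin n₃ → ℝ) :
    tSq X = frobSq (unfold2 X) := by
  simp only [tSq, frobSq, unfold2, Fintype.sum_prod_type, of_apply]
  exact Finset.sum_comm

lemma tSq_eq_frobSq_unfold3 (X : Fin n₁ × Fin n₂ × Fin n₃ → ℝ) :
    tSq X = frobSq (unfold3 X) := by
  simp only [tSq, frobSq, unfold3, Fintype.sum_prod_type, of_apply]
  exact (Finset.sum_congr rfl fun _ _ => Finset.sum_comm).trans Finset.sum_comm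

lemma mode1_mode1 (M : Matrix (Fin m') (Fin m) ℝ) (N : Matrix (Fin m) (Fin n₁) ℝ)
    (X : Fin n₁ × Fin n₂ × Fin n₃ → ℝ) : mode1 M (mode1 N X) = mode1 (M * N) X :=
  unfold1_injective <| by simp only [unfold1_mode1, Matrix.mul_assoc]

lemma mode2_mode2 (M : Matrix (Fin m') (Fin m) ℝ) (N : Matrix (Fin m) (Fin n₂) ℝ)
    (X : Fin n₁ × Fin n₂ × Fin n₃ → ℝ) : mode2 M (mode2 N X) = mode2 (M * N) X :=
  unfold2_injective <| by simp only [unfold2_mode2, Matrix.mul_assoc]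

lemma mode3_mode3 (M : Matrix (Fin m') (Fin m) ℝ) (N : Matrix (Fin m) (Fin n₃) ℝ)
    (X : Fin n₁ × Fin n₂ × Fin n₃ → ℝ) : mode3 M (mode3 N X) = mode3 (M * N) X :=
  unfold3_injective <| by simp only [unfold3_mode3, Matrix.mul_assoc]

lemma mode1_mode2_comm (M : Matrix (Fin m) (Fin n₁) ℝ) (N : Matrix (Fin m') (Fin n₂) ℝ)
    (X : Fin n₁ × Fin n₂ × Fin n₃ → ℝ) : mode1 M (mode2 N X) = mode2 N (mode1 M X) := by
  funext p
  simp only [mode1, mode2, Finset.mul_sum, mul_left_comm]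
  exact Finset.sum_comm

lemma mode1_mode3_comm (M : Matrix (Fin m) (Fin n₁) ℝ) (N : Matrix (Fin m') (Fin n₃) ℝ)
    (X : Fin n₁ × Fin n₂ × Fin n₃ → ℝ) : mode1 M (mode3 N X) = mode3 N (mode1 M X) := by
  funext p
  simp only [mode1, mode3, Finset.mul_sum, mul_left_comm]
  exact Finset.sum_comm

lemma mode2_mode3_comm (M : Matrix (Fin m) (Fin n₂) ℝ) (N : Matrix (Fin m') (Fin n₃) ℝ)
    (X : Fin n₁ × Fin n₂ × Fin n₃ → ℝ) : mode2 M (mode3 N X) = mode3 N (mode2 M X) := by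
  funext p
  simp only [mode2, mode3, Finset.mul_sum, mul_left_comm]
  exact Finset.sum_comm

lemma mode3_mode2_mode1_comp {a₁ a₂ a₃ b₁ b₂ b₃ : ℕ}
    (M₁ : Matrix (Fin a₁) (Fin b₁) ℝ) (N₁ : Matrix (Fin b₁) (Fin n₁) ℝ)
    (M₂ : Matrix (Fin a₂) (Fin b₂) ℝ) (N₂ : Matrix (Fin b₂) (Fin n₂) ℝ)
    (M₃ : Matrix (Fin a₃) (Fin b₃) ℝ) (N₃ : Matrix (Fin b₃) (Fin n₃) ℝ)
    (X : Fin n₁ × Fin n₂ × Fin n₃ → ℝ) :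
    mode3 M₃ (mode2 M₂ (mode1 M₁ (mode3 N₃ (mode2 N₂ (mode1 N₁ X))))) =
      mode3 (M₃ * N₃) (mode2 (M₂ * N₂) (mode1 (M₁ * N₁) X)) := by
  rw [mode1_mode3_comm, mode1_mode2_comm, mode1_mode1, mode2_mode3_comm, mode2_mode2,
    mode3_mode3]

lemma tSq_sub_mode1_self (P : Matrix (Fin n₁) (Fin n₁) ℝ) (X : Fin n₁ × Fin n₂ × Fin n₃ → ℝ) :
    tSq (X - mode1 P X) = frobSq ((1 - P) * unfold1 X) := by
  rw [tSq_eq_frobSq_unfold1, unfold1_sub, unfold1_mode1, Matrix.sub_mul, Matrix.one_mul]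

lemma tSq_sub_mode2_le {P : Matrix (Fin n₂) (Fin n₂) ℝ} (hP : IsStarProjection P)
    (X Y : Fin n₁ × Fin n₂ × Fin n₃ → ℝ) :
    tSq (X - mode2 P Y) ≤ frobSq ((1 - P) * unfold2 X) + tSq (X - Y) := by
  rw [tSq_eq_frobSq_unfold2, tSq_eq_frobSq_unfold2 (X - Y), unfold2_sub, unfold2_sub,
    unfold2_mode2]
  exact frobSq_sub_mul_le hP _ _

lemma tSq_sub_mode3_le {P : Matrix (Fin n₃) (Fin n₃) ℝ} (hP : IsStarProjection P)
    (X Y : Fin n₁ × Fin n₂ × Fin n₃ → ℝ) :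
    tSq (X - mode3 P Y) ≤ frobSq ((1 - P) * unfold3 X) + tSq (X - Y) := by
  rw [tSq_eq_frobSq_unfold3, tSq_eq_frobSq_unfold3 (X - Y), unfold3_sub, unfold3_sub,
    unfold3_mode3]
  exact frobSq_sub_mul_le hP _ _

end Tensor

theorem stmt12_general {n₁ n₂ n₃ r₁ r₂ r₃ : ℕ} (A : Fin n₁ × Fin n₂ × Fin n₃ → ℝ)
    (C : Matrix (Fin n₁) (Fin r₁) ℝ) (B : Matrix (Fin r₁) (Fin n₂ × Fin n₃) ℝ)
    (E : Matrix (Fin n₁) (Fin n₂ × Fin n₃) ℝ)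
    (U₂ : Matrix (Fin n₂) (Fin r₂) ℝ) (S₂ : Matrix (Fin r₂) (Fin r₂) ℝ)
    (V₂ : Matrix (Fin n₁ × Fin n₃) (Fin r₂) ℝ) (H₂ : Matrix (Fin n₂) (Fin n₁ × Fin n₃) ℝ)
    (U₃ : Matrix (Fin n₃) (Fin r₃) ℝ) (S₃ : Matrix (Fin r₃) (Fin r₃) ℝ)
    (V₃ : Matrix (Fin n₁ × Fin n₂) (Fin r₃) ℝ) (H₃ : Matrix (Fin n₃) (Fin n₁ × Fin n₂) ℝ)
    (hrank : C.rank = r₁) (hA1 : unfold1 A = C * B + E)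
    (hU₂ : U₂ᵀ * U₂ = 1) (hA2 : unfold2 A = U₂ * S₂ * V₂ᵀ + H₂)
    (hU₃ : U₃ᵀ * U₃ = 1) (hA3 : unfold3 A = U₃ * S₃ * V₃ᵀ + H₃) :
    tSq (A - mode3 U₃ (mode2 U₂ (mode1 C
        (mode3 U₃ᵀ (mode2 U₂ᵀ (mode1 (pinv C) A)))))) ≤
      frobSq E + frobSq H₂ + frobSq H₃ := by
  have hC := pinv_mul_self_of_rank_eq hrank
  have hU₂' := pinv_mul_self_of_transpose_mul_self hU₂
  have hU₃' := pinv_mul_self_of_transpose_mul_self hU₃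
  rw [← pinv_eq_transpose hU₂, ← pinv_eq_transpose hU₃, mode3_mode2_mode1_comp]
  calc _ ≤ frobSq ((1 - U₃ * pinv U₃) * unfold3 A) +
          (frobSq ((1 - U₂ * pinv U₂) * unfold2 A) + frobSq ((1 - C * pinv C) * unfold1 A)) := by
        refine (tSq_sub_mode3_le (isStarProjection_mul_pinv hU₃') _ _).trans ?_
        rw [← tSq_sub_mode1_self]
        gcongr
        exact tSq_sub_mode2_le (isStarProjection_mul_pinv hU₂') _ _
    _ ≤ frobSq H₃ + (frobSq H₂ + frobSq E) := by
        gcongr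
        · exact frobSq_one_sub_mul_pinv_mul_le hU₃' (by rw [hA3, Matrix.mul_assoc])
        · exact frobSq_one_sub_mul_pinv_mul_le hU₂' (by rw [hA2, Matrix.mul_assoc])
        · exact frobSq_one_sub_mul_pinv_mul_le hC hA1
    _ = frobSq E + frobSq H₂ + frobSq H₃ := by ring

theorem stmt12 {n₁ n₂ n₃ r₁ r₂ r₃ : ℕ} (A : Fin n₁ × Fin n₂ × Fin n₃ → ℝ)
    (C : Matrix (Fin n₁) (Fin r₁) ℝ) (B : Matrix (Fin r₁) (Fin n₂ × Fin n₃) ℝ)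
    (E : Matrix (Fin n₁) (Fin n₂ × Fin n₃) ℝ)
    (U₂ : Matrix (Fin n₂) (Fin r₂) ℝ) (S₂ : Matrix (Fin r₂) (Fin r₂) ℝ)
    (V₂ : Matrix (Fin n₁ × Fin n₃) (Fin r₂) ℝ) (H₂ : Matrix (Fin n₂) (Fin n₁ × Fin n₃) ℝ)
    (U₃ : Matrix (Fin n₃) (Fin r₃) ℝ) (S₃ : Matrix (Fin r₃) (Fin r₃) ℝ)
    (V₃ : Matrix (Fin n₁ × Fin n₂) (Fin r₃) ℝ) (H₃ : Matrix (Fin n₃) (Fin n₁ × Fin n₂) ℝ)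
    (hrank : C.rank = r₁) (hA1 : unfold1 A = C * B + E)
    (hU₂ : U₂ᵀ * U₂ = 1) (hV₂ : V₂ᵀ * V₂ = 1) (hA2 : unfold2 A = U₂ * S₂ * V₂ᵀ + H₂)
    (hU₃ : U₃ᵀ * U₃ = 1) (hV₃ : V₃ᵀ * V₃ = 1) (hA3 : unfold3 A = U₃ * S₃ * V₃ᵀ + H₃) :
    tSq (A - mode3 U₃ (mode2 U₂ (mode1 C
        (mode3 U₃ᵀ (mode2 U₂ᵀ (mode1 (pinv C) A)))))) ≤
      frobSq E + frobSq H₂ + frobSq H₃ :=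
  stmt12_general A C B E U₂ S₂ V₂ H₂ U₃ S₃ V₃ H₃ hrank hA1 hU₂ hA2 hU₃ hA3
end
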